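/- Let f : [0,∞) → [0,∞) satisfy: (a) f is right-continuous; (b) f is non-increasing and f(s) → 0 as s → ∞; (c) there exist real numbers α > 0 and A > 0 such that r·f(s+r) ≤ A·f(s)^{1+α} for all s ≥ 0 and all r ∈ [0,1]. Then for every s₀ ≥ 0 with f(s₀)^α ≤ (2A)^{-1}, one has f(s) = 0 for every s > s₀ + 2A(1 − 2^{−α})^{−1} f(s₀)^α. -/

import Mathlib

/-!
Put `c(t) = 2A f(t)^α`. While `c(t) ≤ 1`, taking `r = c(t)` in (c) gives `f(t + c(t)) ≤ f(t)/2`.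
Starting from `s₀` and repeatedly stepping by `c`, `f` halves at each step, so the `n`-th step has
length at most `2A f(s₀)^α 2^(-nα)`. The steps therefore sum to at most
`2A (1 - 2^(-α))⁻¹ f(s₀)^α`, and at every `s` beyond that total `f(s) ≤ 2^(-n) f(s₀)` for every `n`.
-/

open Finset

/-- Hypothesis (c) of the lemma. -/
def DeGiorgiDecay (f : ℝ → ℝ) (α A : ℝ) : Prop :=
  ∀ s : ℝ, 0 ≤ s → ∀ r : ℝ, 0 ≤ r → r ≤ 1 → r * f (s + r) ≤ A * (f s) ^ (1 + α)

noncomputable def deGiorgiSeq (f : ℝ → ℝ) (α A s₀ : ℝ) (n : ℕ) : ℝ :=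
  (fun t => t + 2 * A * f t ^ α)^[n] s₀

theorem deGiorgiSeq_zero (f : ℝ → ℝ) (α A s₀ : ℝ) : deGiorgiSeq f α A s₀ 0 = s₀ := rfl

theorem deGiorgiSeq_succ (f : ℝ → ℝ) (α A s₀ : ℝ) (n : ℕ) :
    deGiorgiSeq f α A s₀ (n + 1) =
      deGiorgiSeq f α A s₀ n + 2 * A * f (deGiorgiSeq f α A s₀ n) ^ α :=
  Function.iterate_succ_apply' _ _ _

theorem Real.div_two_pow_rpow {x : ℝ} (hx : 0 ≤ x) (α : ℝ) (n : ℕ) :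
    (x / 2 ^ n) ^ α = x ^ α * ((2 : ℝ) ^ (-α)) ^ n := by
  rw [Real.div_rpow hx (by positivity), div_eq_mul_inv, ← Real.rpow_neg (by positivity),
    ← Real.rpow_natCast_mul zero_le_two, ← Real.rpow_mul_natCast zero_le_two, mul_comm (n : ℝ)]

namespace DeGiorgiDecay

variable {f : ℝ → ℝ} {α A : ℝ}

theorem apply_add_le_half (h : DeGiorgiDecay f α A) (hα : 0 < α) (hA : 0 < A) {t : ℝ}
    (ht : 0 ≤ t) (hft : 0 ≤ f t) (hstep : 2 * A * f t ^ α ≤ 1) :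
    f (t + 2 * A * f t ^ α) ≤ f t / 2 := by
  rcases hft.eq_or_lt with hzero | hpos
  · simp [← hzero, Real.zero_rpow hα.ne']
  · have hr : 0 < 2 * A * f t ^ α := by positivity
    refine le_of_mul_le_mul_left ?_ hr
    calc 2 * A * f t ^ α * f (t + 2 * A * f t ^ α)
        ≤ A * f t ^ (1 + α) := h t ht _ hr.le hstep
      _ = 2 * A * f t ^ α * (f t / 2) := by rw [Real.rpow_add hpos, Real.rpow_one]; ring

variable {s₀ : ℝ}

theorem le_deGiorgiSeq_and_apply_le (h : DeGiorgiDecay f α A) (hα : 0 < α) (hA : 0 < A)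
    (hf_nonneg : ∀ s, 0 ≤ s → 0 ≤ f s) (hf_anti : AntitoneOn f (Set.Ici 0))
    (hs₀ : 0 ≤ s₀) (hsmall : f s₀ ^ α ≤ (2 * A)⁻¹) (n : ℕ) :
    s₀ ≤ deGiorgiSeq f α A s₀ n ∧ f (deGiorgiSeq f α A s₀ n) ≤ f s₀ / 2 ^ n := by
  induction n with
  | zero => simp [deGiorgiSeq_zero]
  | succ n ih =>
    obtain ⟨hle, hhalf⟩ := ih
    set t := deGiorgiSeq f α A s₀ n
    have ht : 0 ≤ t := hs₀.trans hle
    have hft : 0 ≤ f t := hf_nonneg t ht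
    have hstep : 2 * A * f t ^ α ≤ 1 := by
      have hpow : f t ^ α ≤ f s₀ ^ α :=
        Real.rpow_le_rpow hft (hf_anti (Set.mem_Ici.2 hs₀) (Set.mem_Ici.2 ht) hle) hα.le
      calc 2 * A * f t ^ α ≤ 2 * A * (2 * A)⁻¹ := by gcongr; exact hpow.trans hsmall
        _ = 1 := mul_inv_cancel₀ (by positivity)
    rw [deGiorgiSeq_succ]
    refine ⟨le_add_of_le_of_nonneg hle (by positivity), ?_⟩
    calc f (t + 2 * A * f t ^ α) ≤ f t / 2 := h.apply_add_le_half hα hA ht hft hstep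
      _ ≤ f s₀ / 2 ^ n / 2 := by gcongr
      _ = f s₀ / 2 ^ (n + 1) := by ring

theorem deGiorgiSeq_le (h : DeGiorgiDecay f α A) (hα : 0 < α) (hA : 0 < A)
    (hf_nonneg : ∀ s, 0 ≤ s → 0 ≤ f s) (hf_anti : AntitoneOn f (Set.Ici 0))
    (hs₀ : 0 ≤ s₀) (hsmall : f s₀ ^ α ≤ (2 * A)⁻¹) (n : ℕ) :
    deGiorgiSeq f α A s₀ n ≤ s₀ + 2 * A * (1 - (2 : ℝ) ^ (-α))⁻¹ * f s₀ ^ α := by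
  set q : ℝ := (2 : ℝ) ^ (-α)
  have hq0 : 0 ≤ q := by positivity
  have hq1 : q < 1 := Real.rpow_lt_one_of_one_lt_of_neg one_lt_two (neg_lt_zero.2 hα)
  have hfs₀ : 0 ≤ f s₀ := hf_nonneg s₀ hs₀
  have hincr (k : ℕ) : deGiorgiSeq f α A s₀ (k + 1) - deGiorgiSeq f α A s₀ k ≤
      2 * A * f s₀ ^ α * q ^ k := by
    obtain ⟨hle, hhalf⟩ := h.le_deGiorgiSeq_and_apply_le hα hA hf_nonneg hf_anti hs₀ hsmall k
    rw [deGiorgiSeq_succ, add_sub_cancel_left, mul_assoc (2 * A) (f s₀ ^ α),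
      ← Real.div_two_pow_rpow hfs₀]
    gcongr
    exact hf_nonneg _ (hs₀.trans hle)
  have hsum : deGiorgiSeq f α A s₀ n - s₀ ≤ 2 * A * f s₀ ^ α * (q ^ 0 / (1 - q)) :=
    calc deGiorgiSeq f α A s₀ n - s₀
        = ∑ k ∈ range n, (deGiorgiSeq f α A s₀ (k + 1) - deGiorgiSeq f α A s₀ k) :=
          (sum_range_sub _ n).symm
      _ ≤ ∑ k ∈ range n, 2 * A * f s₀ ^ α * q ^ k := sum_le_sum fun k _ => hincr k
      _ = 2 * A * f s₀ ^ α * ∑ k ∈ Ico 0 n, q ^ k := by rw [← mul_sum, range_eq_Ico]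
      _ ≤ 2 * A * f s₀ ^ α * (q ^ 0 / (1 - q)) := by
          gcongr; exact geom_sum_Ico_le_of_lt_one hq0 hq1
  rw [pow_zero, one_div] at hsum
  linarith

end DeGiorgiDecay

theorem deGiorgi_lemma (f : ℝ → ℝ)
    (hf_nonneg : ∀ s : ℝ, 0 ≤ s → 0 ≤ f s)
    (hf_anti : AntitoneOn f (Set.Ici (0 : ℝ)))
    (α A : ℝ) (hα : 0 < α) (hA : 0 < A)
    (hiter : ∀ s : ℝ, 0 ≤ s → ∀ r : ℝ, 0 ≤ r → r ≤ 1 →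
      r * f (s + r) ≤ A * (f s) ^ (1 + α))
    (s₀ : ℝ) (hs₀ : 0 ≤ s₀) (hsmall : (f s₀) ^ α ≤ (2 * A)⁻¹) :
    ∀ s : ℝ, s₀ + 2 * A * (1 - (2 : ℝ) ^ (-α))⁻¹ * (f s₀) ^ α < s → f s = 0 := by
  intro s hs
  have h : DeGiorgiDecay f α A := hiter
  have hs_nonneg : 0 ≤ s := by
    have := h.deGiorgiSeq_le hα hA hf_nonneg hf_anti hs₀ hsmall 0
    rw [deGiorgiSeq_zero] at this
    linarith
  have hbound (n : ℕ) : f s ≤ f s₀ / 2 ^ n := by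
    obtain ⟨hle, hhalf⟩ := h.le_deGiorgiSeq_and_apply_le hα hA hf_nonneg hf_anti hs₀ hsmall n
    have hlt := (h.deGiorgiSeq_le hα hA hf_nonneg hf_anti hs₀ hsmall n).trans_lt hs
    exact (hf_anti (Set.mem_Ici.2 (hs₀.trans hle)) (Set.mem_Ici.2 hs_nonneg) hlt.le).trans hhalf
  have hlim : Filter.Tendsto (fun n : ℕ => f s₀ / 2 ^ n) Filter.atTop (nhds 0) :=
    tendsto_const_nhds.div_atTop (tendsto_pow_atTop_atTop_of_one_lt one_lt_two)
  exact le_antisymm (ge_of_tendsto' hlim hbound) (hf_nonneg s hs_nonneg)
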